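/- arXiv:2002.09148 — 4 statements merged into one kernel-verified Lean document; each statement's English description precedes it below -/
import Mathlib

section
/- Let n, m, r, s be integers with 0 ≤ n < m and r + s = m, and let i0 be an integer with 1 ≤ i0 ≤ n+1. Let η : {0, 1, …, n} → {±1} be any function. For each i ∈ {1, …, n+1} with i ≠ i0 define r_i = 1 if either (i < i0 and η(i) = (−1)^{i−1}) or (i > i0 and η(i−1) = (−1)^{i+m−n−2}), and r_i = 0 otherwise; set s_i = 1 − r_i. Define the integers r_{i0} = r − Σ_{i≠i0} r_i and s_{i0} = s − Σ_{i≠i0} s_i. Then η(1)·η(2)⋯η(n)·η(0) = (−1)^{(r−s)(r−s−1)/2} if and only if η(0) = (−1)^{r_{i0}(i0−1) + s_{i0}·i0 + (m−n)(m−n−1)/2}. (Here (r−s)(r−s−1) and (m−n)(m−n−1) are even, so both exponents are integers, and (−1)^k for an integer k, possibly negative, means the sign of the parity of k.) -/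
/-!
Write `P = η(1) ⋯ η(n)` and `R = Σ_{i ≠ i0} r_i`. Because every `η(j)` is a sign, `r_i` is the
exponent that turns the relevant value of `η` into a fixed sign: `(-1)^{r_i} η(i) = (-1)^i` for
`i < i0` and `(-1)^{r_i} η(i-1) = (-1)^{i+m-n-1}` for `i > i0`. Multiplying over `i ≠ i0` gives
`P = (-1)^{R + G}` with `G = Σ_{i ≠ i0} i + (n+1-i0)(m-n-1)`. As `P² = 1`, the left side says
`η(0) = (-1)^{R + G + (r-s)(r-s-1)/2}`; with `r_{i0} = r - R` and `s_{i0} = s - (n - R)` this exponent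
differs from the right-hand one by an even number, by Gauss' formula for `Σ i` and `r + s = m`.
-/

open Finset

theorem Int.negOnePow_sum {ι : Type*} (s : Finset ι) (f : ι → ℤ) :
    (∑ i ∈ s, f i).negOnePow = ∏ i ∈ s, (f i).negOnePow := by
  induction s using Finset.cons_induction with
  | empty => rfl
  | cons a s ha ih => rw [sum_cons, prod_cons, Int.negOnePow_add, ih]

theorem Int.negOnePow_ite_mul_of_eq_one_or_eq_neg_one {x : ℤ} (hx : x = 1 ∨ x = -1) (k : ℕ) :
    ((if x = (-1) ^ k then 1 else 0 : ℤ).negOnePow : ℤ) * x = ((k : ℤ) + 1).negOnePow := by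
  rw [Int.negOnePow_succ, Units.val_neg, Int.coe_negOnePow_natCast]
  rcases hx with rfl | rfl <;> rcases neg_one_pow_eq_or ℤ k with h | h <;> simp [h]

theorem two_mul_sum_Icc_one_id (k : ℕ) : 2 * ∑ i ∈ Icc 1 k, (i : ℤ) = k * (k + 1) := by
  induction k with
  | zero => simp
  | succ k ih =>
    rw [sum_Icc_succ_top (by omega), mul_add, ih]
    push_cast; ring

theorem prod_Icc_eq_prod_Ico_mul_prod_Icc_pred {M : Type*} [CommMonoid M] (f : ℕ → M)
    {n i0 : ℕ} (hi0l : 1 ≤ i0) (hi0u : i0 ≤ n + 1) :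
    ∏ i ∈ Icc 1 n, f i = (∏ i ∈ Ico 1 i0, f i) * ∏ i ∈ Icc (i0 + 1) (n + 1), f (i - 1) := by
  rw [← map_add_right_Icc, prod_map, ← Ico_add_one_right_eq_Icc, ← Ico_add_one_right_eq_Icc,
    ← prod_Ico_consecutive _ hi0l hi0u]
  simp only [addRightEmbedding_apply, add_tsub_cancel_right]

theorem negOnePow_sum_mul_prod_eq {n m i0 : ℕ} (hnm : n ≤ m) (hi0l : 1 ≤ i0) (hi0u : i0 ≤ n + 1)
    {η rr : ℕ → ℤ} (hη : ∀ i ≤ n, η i = 1 ∨ η i = -1)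
    (hrr : ∀ i, 1 ≤ i → i ≤ n + 1 → i ≠ i0 →
      rr i = if ((i < i0 ∧ η i = (-1 : ℤ) ^ (i - 1)) ∨
          (i0 < i ∧ η (i - 1) = (-1 : ℤ) ^ (i + m - n - 2))) then 1 else 0) :
    ((∑ i ∈ (Icc 1 (n + 1)).erase i0, rr i).negOnePow : ℤ) * ∏ i ∈ Icc 1 n, η i =
      (∑ i ∈ (Icc 1 (n + 1)).erase i0, (i : ℤ) + (n + 1 - i0) * (m - n - 1)).negOnePow := by
  have hsplit : (Icc 1 (n + 1)).erase i0 = Ico 1 i0 ∪ Icc (i0 + 1) (n + 1) := by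
    ext; simp only [mem_erase, mem_Icc, mem_Ico, mem_union]; omega
  have hdisj : Disjoint (Ico 1 i0) (Icc (i0 + 1) (n + 1)) :=
    disjoint_left.2 fun i hi hi' ↦ by simp only [mem_Ico, mem_Icc] at hi hi'; omega
  have hlow : ∀ i ∈ Ico 1 i0, ((rr i).negOnePow : ℤ) * η i = (i : ℤ).negOnePow := by
    intro i hi
    rw [mem_Ico] at hi
    have hrri : rr i = if η i = (-1) ^ (i - 1) then 1 else 0 := by
      rw [hrr i hi.1 (by omega) (by omega)]
      simp only [hi.2, true_and, show ¬ i0 < i by omega, false_and, or_false]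
    rw [hrri, Int.negOnePow_ite_mul_of_eq_one_or_eq_neg_one (hη i (by omega)),
      show ((i - 1 : ℕ) : ℤ) + 1 = i by omega]
  have hhigh : ∀ i ∈ Icc (i0 + 1) (n + 1),
      ((rr i).negOnePow : ℤ) * η (i - 1) = ((i : ℤ) + (m - n - 1)).negOnePow := by
    intro i hi
    rw [mem_Icc] at hi
    have hrri : rr i = if η (i - 1) = (-1) ^ (i + m - n - 2) then 1 else 0 := by
      rw [hrr i (by omega) hi.2 (by omega)]
      simp only [show i0 < i by omega, true_and, show ¬ i < i0 by omega, false_and, false_or]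
    rw [hrri, Int.negOnePow_ite_mul_of_eq_one_or_eq_neg_one (hη (i - 1) (by omega)),
      show ((i + m - n - 2 : ℕ) : ℤ) + 1 = i + (m - n - 1) by omega]
  rw [hsplit, sum_union hdisj, Int.negOnePow_add, Int.negOnePow_sum, Int.negOnePow_sum,
    prod_Icc_eq_prod_Ico_mul_prod_Icc_pred η hi0l hi0u, Units.val_mul, Units.coe_prod,
    Units.coe_prod, mul_mul_mul_comm, ← prod_mul_distrib, ← prod_mul_distrib,
    prod_congr rfl hlow, prod_congr rfl hhigh, ← Units.coe_prod, ← Units.coe_prod,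
    ← Units.val_mul, ← Int.negOnePow_sum, ← Int.negOnePow_sum, ← Int.negOnePow_add,
    sum_add_distrib, sum_const, Nat.card_Icc, nsmul_eq_mul, sum_union hdisj, ← add_assoc,
    Nat.add_sub_add_right, Nat.cast_sub hi0u, Nat.cast_add_one]

theorem negOnePow_exponent_eq {r s m n i0 R S : ℤ} (hrs : r + s = m)
    (hS : 2 * S = (n + 1) * (n + 2) - 2 * i0) :
    (R + (S + (n + 1 - i0) * (m - n - 1)) + (r - s) * (r - s - 1) / 2).negOnePow =
      ((r - R) * (i0 - 1) + (s - (n - R)) * i0 + (m - n) * (m - n - 1) / 2).negOnePow := by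
  subst hrs
  obtain ⟨a, ha⟩ := Int.even_mul_pred_self (r - s)
  obtain ⟨b, hb⟩ := Int.even_mul_pred_self (r + s - n)
  rw [ha, hb, ← two_mul, ← two_mul, Int.mul_ediv_cancel_left _ two_ne_zero,
    Int.mul_ediv_cancel_left _ two_ne_zero, Int.negOnePow_eq_iff]
  refine ⟨S + i0 - n - 1 + n * (r + s - n) - (r + s - n) * (i0 - 1) - r * s, ?_⟩
  apply mul_left_cancel₀ (two_ne_zero' ℤ)
  linear_combination -hS - ha + hb

/-- Lemma 5.2 of the paper (combinatorial form): the relevance condition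
`η'(e'_1 + ⋯ + e'_n + e'_0) = (−1)^{(r−s)(r−s−1)/2}` is equivalent to
`η'(e'_0) = (−1)^{r_{i0}(i0−1) + s_{i0} i0 + (m−n)(m−n−1)/2}`. -/
theorem stmt0 (n m : ℕ) (r s : ℤ) (i0 : ℕ)
    (hnm : n < m) (hrs : r + s = (m : ℤ))
    (hi0l : 1 ≤ i0) (hi0u : i0 ≤ n + 1)
    (η : ℕ → ℤ) (hη : ∀ i ≤ n, η i = 1 ∨ η i = -1)
    (rr ss : ℕ → ℤ)
    (hrr : ∀ i, 1 ≤ i → i ≤ n + 1 → i ≠ i0 →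
      rr i = if ((i < i0 ∧ η i = (-1 : ℤ) ^ (i - 1)) ∨
          (i0 < i ∧ η (i - 1) = (-1 : ℤ) ^ (i + m - n - 2))) then 1 else 0)
    (hss : ∀ i, 1 ≤ i → i ≤ n + 1 → i ≠ i0 → ss i = 1 - rr i)
    (ri0 si0 : ℤ)
    (hri0 : ri0 = r - ∑ i ∈ (Finset.Icc 1 (n + 1)).erase i0, rr i)
    (hsi0 : si0 = s - ∑ i ∈ (Finset.Icc 1 (n + 1)).erase i0, ss i) :
    (∏ i ∈ Finset.Icc 1 n, η i) * η 0 =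
        (Int.negOnePow ((r - s) * (r - s - 1) / 2) : ℤ) ↔
      η 0 = (Int.negOnePow (ri0 * ((i0 : ℤ) - 1) + si0 * (i0 : ℤ) +
        ((m : ℤ) - (n : ℤ)) * ((m : ℤ) - (n : ℤ) - 1) / 2) : ℤ) := by
  have hi0 : i0 ∈ Icc 1 (n + 1) := mem_Icc.2 ⟨hi0l, hi0u⟩
  have hsum_ss : ∑ i ∈ (Icc 1 (n + 1)).erase i0, ss i =
      n - ∑ i ∈ (Icc 1 (n + 1)).erase i0, rr i := by
    have hss' : ∀ i ∈ (Icc 1 (n + 1)).erase i0, ss i = 1 - rr i := fun i hi ↦ by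
      obtain ⟨hne, hmem⟩ := mem_erase.1 hi
      exact hss i (mem_Icc.1 hmem).1 (mem_Icc.1 hmem).2 hne
    rw [sum_congr rfl hss', sum_sub_distrib, sum_const, card_erase_of_mem hi0, Nat.card_Icc]
    simp
  have hgauss : 2 * ∑ i ∈ (Icc 1 (n + 1)).erase i0, (i : ℤ) = (n + 1) * (n + 2) - 2 * i0 := by
    rw [sum_erase_eq_sub hi0, mul_sub, two_mul_sum_Icc_one_id]
    push_cast; ring
  have hprod := negOnePow_sum_mul_prod_eq hnm.le hi0l hi0u hη hrr
  set R := ∑ i ∈ (Icc 1 (n + 1)).erase i0, rr i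
  have hP : ∏ i ∈ Icc 1 n, η i =
      (R + (∑ i ∈ (Icc 1 (n + 1)).erase i0, (i : ℤ) + (n + 1 - i0) * (m - n - 1))).negOnePow := by
    rw [Int.negOnePow_add, Units.val_mul, ← hprod, ← mul_assoc, ← Units.val_mul,
      Int.units_mul_self, Units.val_one, one_mul]
  rw [hP, ← Units.eq_inv_mul_iff_mul_eq, Int.units_inv_eq_self, ← Units.val_mul,
    ← Int.negOnePow_add, negOnePow_exponent_eq hrs hgauss, hri0, hsi0, hsum_ss]
end

section
/- Fix an integer k ≥ 1 and nonnegative integers x, y, z, w; put n = x+y+z+w+k and m = n−k. Let α₁ > ⋯ > α_x, β₁ > ⋯ > β_y, γ₁ > ⋯ > γ_z, δ₁ > ⋯ > δ_w be rational numbers, each lying in ℤ + (k−1)/2, with α_i, γ_j ≥ (k+1)/2 and β_i, δ_j ≤ −(k+1)/2, such that the α's and γ's are pairwise distinct and the β's and δ's are pairwise distinct. Define λ'' on n coordinates as follows: λ'' = α_i − (n+1)/2 + i + #{k' : γ_{k'} > α_i} at the coordinate of α_i; λ'' = x+z−m/2 at each of k 'middle' coordinates; λ'' = β_j + (n−1)/2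 + j − y − #{l : δ_l < β_j} at the coordinate of β_j; λ'' = γ_{k'} − (n+1)/2 + k' + #{i : α_i > γ_{k'}} at the coordinate of γ_{k'}; λ'' = δ_l + (n−1)/2 + l − w − #{j : β_j < δ_l} at the coordinate of δ_l. Rank the n coordinates by: the α- and γ-coordinates in decreasing order of α-, γ-values (ranks 1, …, x+z), then the k middle coordinates (ranks x+z+1, …, x+z+k), then the β- and δ-coordinates in decreasing order of β-, δ-values (ranks x+z+k+1, …, n). Then for every pair of coordinates c, c' of consecutive ranks R(c') = R(c)+1, one has λ''_c − λ''_{c'} > −1. -/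
/-!
List the α- and γ-values together in decreasing order, and likewise the β- and δ-values. The
counting terms in the definition of `λ''` turn the index `i` of `α i` into the position of `α i`
in this merged list (for `β j` after writing `#{δ l < β j} = w - #{δ l > β j}`), so on each
merged block `λ''` is the value plus its position plus a constant. Hence within a block
`λ''_c - λ''_c' + 1` is the drop between consecutive values, which is positive; at the two
junctions with the middle block the bounds `α, γ ≥ (k+1)/2` and `β, δ ≤ -(k+1)/2` do the same job.
-/

open Finset

section Rank

variable {α : Type*} [LinearOrder α]

def rankDesc (s : Finset α) (v : α) : ℕ := #{t ∈ s | v < t} + 1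

theorem rankDesc_strictAntiOn (s : Finset α) : StrictAntiOn (rankDesc s) s := by
  intro v _ v' hv' hvv'
  have hss : {t ∈ s | v' < t} ⊂ {t ∈ s | v < t} :=
    (ssubset_iff_of_subset (monotone_filter_right s fun _ _ => hvv'.trans)).2
      ⟨v', mem_filter.2 ⟨hv', hvv'⟩, by simp⟩
  simpa [rankDesc] using card_lt_card hss

theorem rankDesc_mem_Icc {s : Finset α} {v : α} (hv : v ∈ s) : rankDesc s v ∈ Icc 1 #s := by
  have hss : {t ∈ s | v < t} ⊂ s := filter_ssubset.2 ⟨v, hv, lt_irrefl v⟩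
  have := card_lt_card hss
  rw [mem_Icc, rankDesc]
  omega

theorem image_rankDesc (s : Finset α) : s.image (rankDesc s) = Icc 1 #s :=
  eq_of_subset_of_card_le (image_subset_iff.2 fun _ hv => rankDesc_mem_Icc hv)
    (by rw [Nat.card_Icc, card_image_of_injOn (rankDesc_strictAntiOn s).injOn]; omega)

theorem exists_rankDesc_eq {s : Finset α} {r : ℕ} (hr : r ∈ Icc 1 #s) :
    ∃ v ∈ s, rankDesc s v = r := by
  rwa [← image_rankDesc, mem_image] at hr

theorem card_filter_lt_add_card_filter_gt {ι : Type*} {s : Finset ι} {f : ι → α} {c : α}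
    (hc : ∀ i ∈ s, f i ≠ c) : #{i ∈ s | f i < c} + #{i ∈ s | c < f i} = #s := by
  rw [← card_filter_add_card_filter_not (s := s) (fun i => f i < c)]
  congr 2
  exact filter_congr fun i hi => by rw [not_lt, (hc i hi).symm.le_iff_lt]

theorem card_filter_lt_add_one_of_strictAntiOn {a : ℕ → α} {p i : ℕ}
    (ha : StrictAntiOn a (Set.Icc 1 p)) (h1 : 1 ≤ i) (h2 : i ≤ p) :
    #{i' ∈ Icc 1 p | a i < a i'} + 1 = i := by
  have hfilter : {i' ∈ Icc 1 p | a i < a i'} = Ico 1 i := by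
    ext i'
    simp only [mem_filter, mem_Icc, mem_Ico]
    constructor
    · rintro ⟨hi', hlt⟩
      exact ⟨hi'.1, (ha.lt_iff_gt ⟨h1, h2⟩ hi').1 hlt⟩
    · rintro ⟨h1', hlt⟩
      exact ⟨⟨h1', by omega⟩, (ha.lt_iff_gt ⟨h1, h2⟩ ⟨h1', by omega⟩).2 hlt⟩
  rw [hfilter, Nat.card_Ico]
  omega

end Rank

section Merge

variable {α : Type*} [LinearOrder α] {a b : ℕ → α} {p q : ℕ}

def merge (a b : ℕ → α) (p q : ℕ) : Finset α := (Icc 1 p).image a ∪ (Icc 1 q).image b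

theorem merge_comm : merge a b p q = merge b a q p := union_comm _ _

theorem forall_mem_merge {P : α → Prop} :
    (∀ v ∈ merge a b p q, P v) ↔
      (∀ i, 1 ≤ i → i ≤ p → P (a i)) ∧ ∀ j, 1 ≤ j → j ≤ q → P (b j) := by
  simp only [merge, forall_mem_union, forall_mem_image, mem_Icc, and_imp]

theorem disjoint_image_Icc_image_Icc (hab : ∀ i j, 1 ≤ i → i ≤ p → 1 ≤ j → j ≤ q → a i ≠ b j) :
    Disjoint ((Icc 1 p).image a) ((Icc 1 q).image b) := by
  simp only [disjoint_left, mem_image, mem_Icc]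
  rintro _ ⟨i, ⟨h1, h2⟩, rfl⟩ ⟨j, ⟨h3, h4⟩, hji⟩
  exact hab i j h1 h2 h3 h4 hji.symm

variable (ha : StrictAntiOn a (Set.Icc 1 p)) (hb : StrictAntiOn b (Set.Icc 1 q))
  (hab : ∀ i j, 1 ≤ i → i ≤ p → 1 ≤ j → j ≤ q → a i ≠ b j)
include ha hb hab

theorem card_merge : #(merge a b p q) = p + q := by
  rw [merge, card_union_of_disjoint (disjoint_image_Icc_image_Icc hab),
    card_image_of_injOn (by simpa using ha.injOn), card_image_of_injOn (by simpa using hb.injOn)]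
  simp

theorem rankDesc_merge (v : α) :
    rankDesc (merge a b p q) v = #{i ∈ Icc 1 p | v < a i} + #{j ∈ Icc 1 q | v < b j} + 1 := by
  rw [rankDesc, merge, filter_union,
    card_union_of_disjoint (disjoint_filter_filter (disjoint_image_Icc_image_Icc hab)),
    filter_image, filter_image, card_image_of_injOn, card_image_of_injOn]
  · exact hb.injOn.mono fun j hj => mem_Icc.1 (mem_filter.1 hj).1
  · exact ha.injOn.mono fun i hi => mem_Icc.1 (mem_filter.1 hi).1

end Merge

section RankAffine

variable {K : Type*} [CommRing K] [LinearOrder K] [IsStrictOrderedRing K]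

def RankAffine (g : ℕ → K) (s : Finset K) (c : K) : Prop :=
  ∀ v ∈ s, g (rankDesc s v) = v + rankDesc s v + c

theorem RankAffine.neg_one_lt_sub_succ {g : ℕ → K} {s : Finset K} {c : K} (hg : RankAffine g s c)
    {r : ℕ} (hr : 1 ≤ r) (hrs : r < #s) : -1 < g r - g (r + 1) := by
  obtain ⟨v, hv, rfl⟩ := exists_rankDesc_eq (mem_Icc.2 ⟨hr, hrs.le⟩)
  obtain ⟨v', hv', hv'r⟩ := exists_rankDesc_eq (mem_Icc.2 ⟨le_add_self, hrs⟩)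
  have hlt : v' < v := ((rankDesc_strictAntiOn s).lt_iff_gt hv hv').1 (by omega)
  rw [hg v hv, ← hv'r, hg v' hv', hv'r]
  push_cast
  linarith

variable {a b : ℕ → K} {p q : ℕ} {g : ℕ → K} {c : K}
  (ha : StrictAntiOn a (Set.Icc 1 p)) (hb : StrictAntiOn b (Set.Icc 1 q))
  (hab : ∀ i j, 1 ≤ i → i ≤ p → 1 ≤ j → j ≤ q → a i ≠ b j)
include ha hb hab

theorem apply_rankDesc_merge_left_of_above
    (hg : ∀ i, 1 ≤ i → i ≤ p →
      g (#{i' ∈ Icc 1 p | a i < a i'} + #{j ∈ Icc 1 q | a i < b j} + 1)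
        = a i - c + i + #{j ∈ Icc 1 q | a i < b j})
    {i : ℕ} (h1 : 1 ≤ i) (h2 : i ≤ p) :
    g (rankDesc (merge a b p q) (a i)) = a i + rankDesc (merge a b p q) (a i) + -c := by
  have hi : (#{i' ∈ Icc 1 p | a i < a i'} : K) + 1 = i := by
    exact_mod_cast card_filter_lt_add_one_of_strictAntiOn ha h1 h2
  rw [rankDesc_merge ha hb hab, hg i h1 h2]
  push_cast
  linarith

theorem rankAffine_merge_of_above
    (hga : ∀ i, 1 ≤ i → i ≤ p →
      g (#{i' ∈ Icc 1 p | a i < a i'} + #{j ∈ Icc 1 q | a i < b j} + 1)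
        = a i - c + i + #{j ∈ Icc 1 q | a i < b j})
    (hgb : ∀ j, 1 ≤ j → j ≤ q →
      g (#{j' ∈ Icc 1 q | b j < b j'} + #{i ∈ Icc 1 p | b j < a i} + 1)
        = b j - c + j + #{i ∈ Icc 1 p | b j < a i}) :
    RankAffine g (merge a b p q) (-c) := by
  refine forall_mem_merge.2 ⟨fun i => apply_rankDesc_merge_left_of_above ha hb hab hga,
    fun j h1 h2 => ?_⟩
  rw [merge_comm]
  exact apply_rankDesc_merge_left_of_above hb ha
    (fun j i h1 h2 h3 h4 => (hab i j h3 h4 h1 h2).symm) hgb h1 h2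

theorem apply_rankDesc_merge_left_of_below
    (hg : ∀ i, 1 ≤ i → i ≤ p →
      g (#{i' ∈ Icc 1 p | a i < a i'} + #{j ∈ Icc 1 q | a i < b j} + 1)
        = a i + c + i - p - #{j ∈ Icc 1 q | b j < a i})
    {i : ℕ} (h1 : 1 ≤ i) (h2 : i ≤ p) :
    g (rankDesc (merge a b p q) (a i)) = a i + rankDesc (merge a b p q) (a i) + (c - (p + q)) := by
  have hi : (#{i' ∈ Icc 1 p | a i < a i'} : K) + 1 = i := by
    exact_mod_cast card_filter_lt_add_one_of_strictAntiOn ha h1 h2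
  have hsplit : (#{j ∈ Icc 1 q | b j < a i} : K) + #{j ∈ Icc 1 q | a i < b j} = q := by
    have := card_filter_lt_add_card_filter_gt (s := Icc 1 q) (f := b) (c := a i)
      fun j hj => (hab i j h1 h2 (mem_Icc.1 hj).1 (mem_Icc.1 hj).2).symm
    rw [Nat.card_Icc, Nat.add_sub_cancel] at this
    exact_mod_cast this
  rw [rankDesc_merge ha hb hab, hg i h1 h2]
  push_cast
  linarith

theorem rankAffine_merge_of_below
    (hga : ∀ i, 1 ≤ i → i ≤ p →
      g (#{i' ∈ Icc 1 p | a i < a i'} + #{j ∈ Icc 1 q | a i < b j} + 1)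
        = a i + c + i - p - #{j ∈ Icc 1 q | b j < a i})
    (hgb : ∀ j, 1 ≤ j → j ≤ q →
      g (#{j' ∈ Icc 1 q | b j < b j'} + #{i ∈ Icc 1 p | b j < a i} + 1)
        = b j + c + j - q - #{i ∈ Icc 1 p | a i < b j}) :
    RankAffine g (merge a b p q) (c - (p + q)) := by
  refine forall_mem_merge.2 ⟨fun i => apply_rankDesc_merge_left_of_below ha hb hab hga,
    fun j h1 h2 => ?_⟩
  rw [merge_comm, add_comm (p : K)]
  exact apply_rankDesc_merge_left_of_below hb ha
    (fun j i h1 h2 h3 h4 => (hab i j h3 h4 h1 h2).symm) hgb h1 h2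

omit ha hb hab

theorem neg_one_lt_sub_succ_of_rankAffine {Λ : ℕ → K} {T B : Finset K} {k : ℕ}
    {cT cB μ L U : K} (hk : 1 ≤ k) (hT : RankAffine Λ T cT)
    (hmid : ∀ j, 1 ≤ j → j ≤ k → Λ (#T + j) = μ) (hB : RankAffine (fun r => Λ (#T + k + r)) B cB)
    (hTL : ∀ v ∈ T, L ≤ v) (hBU : ∀ v ∈ B, v ≤ U) (hLμ : μ - 1 < L + #T + cT)
    (hUμ : U + cB < μ) {R : ℕ} (hR : 1 ≤ R) (hRn : R < #T + k + #B) :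
    -1 < Λ R - Λ (R + 1) := by
  rcases lt_or_ge R #T with hRT | hRT
  · exact hT.neg_one_lt_sub_succ hR hRT
  rcases hRT.eq_or_lt with rfl | hRT
  · obtain ⟨v, hv, hvT⟩ := exists_rankDesc_eq (mem_Icc.2 ⟨hR, le_rfl⟩)
    have hΛT := hT v hv
    rw [hvT] at hΛT
    rw [hΛT, hmid 1 le_rfl hk]
    linarith [hTL v hv]
  rcases lt_or_ge R (#T + k) with hRk | hRk
  · obtain ⟨j, rfl⟩ : ∃ j, R = #T + j := ⟨R - #T, by omega⟩
    rw [hmid j (by omega) (by omega), add_assoc, hmid (j + 1) (by omega) (by omega)]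
    simp
  rcases hRk.eq_or_lt with rfl | hRk
  · obtain ⟨v, hv, hvB⟩ := exists_rankDesc_eq (s := B) (mem_Icc.2 ⟨le_rfl, by omega⟩)
    have hΛB := hB v hv
    simp only [hvB] at hΛB
    rw [hmid k hk le_rfl, hΛB]
    push_cast
    linarith [hBU v hv]
  obtain ⟨r, rfl⟩ : ∃ r, R = #T + k + r := ⟨R - (#T + k), by omega⟩
  exact hB.neg_one_lt_sub_succ (by omega) (by omega)

end RankAffine

theorem stmt4_general (k x y z w n m : ℕ) (hk : 1 ≤ k)
    (hn : n = x + y + z + w + k) (hm : m = n - k)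
    (α β γ δ : ℕ → ℚ)
    (hα : ∀ i j, 1 ≤ i → i < j → j ≤ x → α j < α i)
    (hβ : ∀ i j, 1 ≤ i → i < j → j ≤ y → β j < β i)
    (hγ : ∀ i j, 1 ≤ i → i < j → j ≤ z → γ j < γ i)
    (hδ : ∀ i j, 1 ≤ i → i < j → j ≤ w → δ j < δ i)
    (hαlb : ∀ i, 1 ≤ i → i ≤ x → ((k : ℚ) + 1) / 2 ≤ α i)
    (hγlb : ∀ i, 1 ≤ i → i ≤ z → ((k : ℚ) + 1) / 2 ≤ γ i)
    (hβub : ∀ i, 1 ≤ i → i ≤ y → β i ≤ -(((k : ℚ) + 1) / 2))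
    (hδub : ∀ i, 1 ≤ i → i ≤ w → δ i ≤ -(((k : ℚ) + 1) / 2))
    (hαγ : ∀ i j, 1 ≤ i → i ≤ x → 1 ≤ j → j ≤ z → α i ≠ γ j)
    (hβδ : ∀ i j, 1 ≤ i → i ≤ y → 1 ≤ j → j ≤ w → β i ≠ δ j)
    (Λ : ℕ → ℚ)
    (hΛα : ∀ i, 1 ≤ i → i ≤ x →
      Λ (((Finset.Icc 1 x).filter fun i' => α i < α i').card
          + ((Finset.Icc 1 z).filter fun j => α i < γ j).card + 1)
        = α i - ((n : ℚ) + 1) / 2 + i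
          + (((Finset.Icc 1 z).filter fun j => α i < γ j).card : ℚ))
    (hΛγ : ∀ j, 1 ≤ j → j ≤ z →
      Λ (((Finset.Icc 1 z).filter fun j' => γ j < γ j').card
          + ((Finset.Icc 1 x).filter fun i => γ j < α i).card + 1)
        = γ j - ((n : ℚ) + 1) / 2 + j
          + (((Finset.Icc 1 x).filter fun i => γ j < α i).card : ℚ))
    (hΛmid : ∀ j, 1 ≤ j → j ≤ k →
      Λ (x + z + j) = (x : ℚ) + (z : ℚ) - (m : ℚ) / 2)
    (hΛβ : ∀ j, 1 ≤ j → j ≤ y →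
      Λ (x + z + k + (((Finset.Icc 1 y).filter fun j' => β j < β j').card
          + ((Finset.Icc 1 w).filter fun l => β j < δ l).card + 1))
        = β j + ((n : ℚ) - 1) / 2 + j - y
          - (((Finset.Icc 1 w).filter fun l => δ l < β j).card : ℚ))
    (hΛδ : ∀ l, 1 ≤ l → l ≤ w →
      Λ (x + z + k + (((Finset.Icc 1 w).filter fun l' => δ l < δ l').card
          + ((Finset.Icc 1 y).filter fun j => δ l < β j).card + 1))
        = δ l + ((n : ℚ) - 1) / 2 + l - w
          - (((Finset.Icc 1 y).filter fun j => β j < δ l).card : ℚ)) :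
    ∀ R, 1 ≤ R → R < n → Λ R - Λ (R + 1) > -1 := by
  intro R hR hRn
  have hα' : StrictAntiOn α (Set.Icc 1 x) := fun i hi j hj hij => hα i j hi.1 hij hj.2
  have hβ' : StrictAntiOn β (Set.Icc 1 y) := fun i hi j hj hij => hβ i j hi.1 hij hj.2
  have hγ' : StrictAntiOn γ (Set.Icc 1 z) := fun i hi j hj hij => hγ i j hi.1 hij hj.2
  have hδ' : StrictAntiOn δ (Set.Icc 1 w) := fun i hi j hj hij => hδ i j hi.1 hij hj.2
  have hT := card_merge hα' hγ' hαγ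
  have hB := card_merge hβ' hδ' hβδ
  have hmQ : (m : ℚ) = x + y + z + w := by exact_mod_cast (by omega : m = x + y + z + w)
  have hnQ : (n : ℚ) = x + y + z + w + k := by exact_mod_cast hn
  refine neg_one_lt_sub_succ_of_rankAffine (Λ := Λ) (T := merge α γ x z) (B := merge β δ y w)
    (μ := x + z - m / 2) hk (rankAffine_merge_of_above hα' hγ' hαγ hΛα hΛγ) (by rwa [hT])
    (by rw [hT]; exact rankAffine_merge_of_below hβ' hδ' hβδ hΛβ hΛδ)
    (forall_mem_merge.2 ⟨hαlb, hγlb⟩) (forall_mem_merge.2 ⟨hβub, hδub⟩) ?_ ?_ hR (by omega)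
  · rw [hT]
    push_cast
    linarith
  · linarith

/-- The verification that `λ''` is in the good range in the reduction of
Theorem 4.1(2) to Theorem 4.1(1): if `Λ R` denotes the value of `λ''` at the
coordinate of rank `R` (the rank of a coordinate within a block sorted in
decreasing order of values being one more than the number of coordinates of
that block with strictly larger value), then consecutive values satisfy
`Λ R − Λ (R+1) > −1`. -/
theorem stmt4 (k x y z w n m : ℕ) (hk : 1 ≤ k)
    (hn : n = x + y + z + w + k) (hm : m = n - k)
    (α β γ δ : ℕ → ℚ)
    (hα : ∀ i j, 1 ≤ i → i < j → j ≤ x → α j < α i)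
    (hβ : ∀ i j, 1 ≤ i → i < j → j ≤ y → β j < β i)
    (hγ : ∀ i j, 1 ≤ i → i < j → j ≤ z → γ j < γ i)
    (hδ : ∀ i j, 1 ≤ i → i < j → j ≤ w → δ j < δ i)
    (hαint : ∀ i, 1 ≤ i → i ≤ x → ∃ t : ℤ, α i = t + ((k : ℚ) - 1) / 2)
    (hβint : ∀ i, 1 ≤ i → i ≤ y → ∃ t : ℤ, β i = t + ((k : ℚ) - 1) / 2)
    (hγint : ∀ i, 1 ≤ i → i ≤ z → ∃ t : ℤ, γ i = t + ((k : ℚ) - 1) / 2)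
    (hδint : ∀ i, 1 ≤ i → i ≤ w → ∃ t : ℤ, δ i = t + ((k : ℚ) - 1) / 2)
    (hαlb : ∀ i, 1 ≤ i → i ≤ x → ((k : ℚ) + 1) / 2 ≤ α i)
    (hγlb : ∀ i, 1 ≤ i → i ≤ z → ((k : ℚ) + 1) / 2 ≤ γ i)
    (hβub : ∀ i, 1 ≤ i → i ≤ y → β i ≤ -(((k : ℚ) + 1) / 2))
    (hδub : ∀ i, 1 ≤ i → i ≤ w → δ i ≤ -(((k : ℚ) + 1) / 2))
    (hαγ : ∀ i j, 1 ≤ i → i ≤ x → 1 ≤ j → j ≤ z → α i ≠ γ j)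
    (hβδ : ∀ i j, 1 ≤ i → i ≤ y → 1 ≤ j → j ≤ w → β i ≠ δ j)
    (Λ : ℕ → ℚ)
    (hΛα : ∀ i, 1 ≤ i → i ≤ x →
      Λ (((Finset.Icc 1 x).filter fun i' => α i < α i').card
          + ((Finset.Icc 1 z).filter fun j => α i < γ j).card + 1)
        = α i - ((n : ℚ) + 1) / 2 + i
          + (((Finset.Icc 1 z).filter fun j => α i < γ j).card : ℚ))
    (hΛγ : ∀ j, 1 ≤ j → j ≤ z →
      Λ (((Finset.Icc 1 z).filter fun j' => γ j < γ j').card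
          + ((Finset.Icc 1 x).filter fun i => γ j < α i).card + 1)
        = γ j - ((n : ℚ) + 1) / 2 + j
          + (((Finset.Icc 1 x).filter fun i => γ j < α i).card : ℚ))
    (hΛmid : ∀ j, 1 ≤ j → j ≤ k →
      Λ (x + z + j) = (x : ℚ) + (z : ℚ) - (m : ℚ) / 2)
    (hΛβ : ∀ j, 1 ≤ j → j ≤ y →
      Λ (x + z + k + (((Finset.Icc 1 y).filter fun j' => β j < β j').card
          + ((Finset.Icc 1 w).filter fun l => β j < δ l).card + 1))
        = β j + ((n : ℚ) - 1) / 2 + j - y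
          - (((Finset.Icc 1 w).filter fun l => δ l < β j).card : ℚ))
    (hΛδ : ∀ l, 1 ≤ l → l ≤ w →
      Λ (x + z + k + (((Finset.Icc 1 w).filter fun l' => δ l < δ l').card
          + ((Finset.Icc 1 y).filter fun j => δ l < β j).card + 1))
        = δ l + ((n : ℚ) - 1) / 2 + l - w
          - (((Finset.Icc 1 y).filter fun j => β j < δ l).card : ℚ)) :
    ∀ R, 1 ≤ R → R < n → Λ R - Λ (R + 1) > -1 :=
  stmt4_general k x y z w n m hk hn hm α β γ δ hα hβ hγ hδ hαlb hγlb hβub hδub hαγ hβδ Λ hΛα hΛγ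
    hΛmid hΛβ hΛδ
end

section
/- Let m₀, n₀ be integers, let x, y, z, w be nonnegative integers, put n = x + y + z + w, and let m, r, s be integers with m > n, r + s = m, r ≥ x + w, s ≥ z + y. Let α₁ > ⋯ > α_x > 0 ≥ β₁ > ⋯ > β_y and γ₁ > ⋯ > γ_z > 0 ≥ δ₁ > ⋯ > δ_w be rational numbers, pairwise distinct as a list of n numbers. Let κ₁ > ⋯ > κ_n be the decreasing enumeration of the n numbers α_i + m₀/2, β_j + m₀/2, γ_k + m₀/2, δ_l + m₀/2, and put i0 = x+z+1 (so κ_i − m₀/2 > 0 exactly for i < i0). For 1 ≤ i ≤ n+1 with i ≠ i0, set (r_i, s_i) = (1,0) if either (i < i0 and κ_i − m₀/2 ∈ {α₁,…,α_x}) or (i > i0 and κ_{i−1} − m₀/2 ∈ {δ₁,…,δ_w}), and (r_i, s_i) = (0,1) otherwise; set r_{i0} = r − Σ_{i≠i0} r_i and s_{i0} = s − Σ_{i≠i0} s_i. Define μ_i = κ_i − m₀/2 + n₀/2 for 1 ≤ i ≤ n and μ₀ = n₀/2, and define λ̃'_i = μ_i − (m−1)/2 + i − 1 for i < i0, λ̃'_{i0}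 = μ₀ − n/2 + i0 − 1, and λ̃'_i = μ_{i−1} − (m−1)/2 + i + m − n − 2 for i > i0. Then: (a) r_{i0} = r − x − w and s_{i0} = s − z − y; and (b) for i < i0, if κ_i − m₀/2 = α_j then λ̃'_i = α_j − (m+1)/2 + j + #{k : γ_k > α_j} + n₀/2, and if κ_i − m₀/2 = γ_k then λ̃'_i = γ_k − (m+1)/2 + k + #{i' : α_{i'} > γ_k} + n₀/2; λ̃'_{i0} = x + z − n/2 + n₀/2; and for i > i0, if κ_{i−1} − m₀/2 = β_j then λ̃'_i = β_j + (m−1)/2 + j − y − #{l : δ_l < β_j} + n₀/2, and if κ_{i−1} − m₀/2 = δ_l then λ̃'_i = δ_l + (m−1)/2 + l − w − #{j' : β_{j'} < δ_l} + n₀/2. -/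
private lemma stmt5_le_iff {f : ℕ → ℚ} {N : ℕ}
    (hf : ∀ i j, 1 ≤ i → i < j → j ≤ N → f j < f i)
    {i j : ℕ} (h1 : 1 ≤ i) (h2 : i ≤ N) (h3 : 1 ≤ j) (h4 : j ≤ N) :
    f i ≤ f j ↔ j ≤ i := by
  constructor
  · intro h
    by_contra hcon
    push_neg at hcon
    exact absurd h (not_le.2 (hf i j h1 hcon h4))
  · intro h
    rcases eq_or_lt_of_le h with h | h
    · rw [h]
    · exact (hf j i h3 h h2).le

private lemma stmt5_injOn {f : ℕ → ℚ} {N : ℕ}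
    (hf : ∀ i j, 1 ≤ i → i < j → j ≤ N → f j < f i) :
    Set.InjOn f (Finset.Icc 1 N) := by
  intro a ha b hb hab
  simp only [Finset.coe_Icc, Set.mem_Icc] at ha hb
  rcases lt_trichotomy a b with h | h | h
  · exact absurd hab (hf a b ha.1 h hb.2).ne'
  · exact h
  · exact absurd hab (hf b a hb.1 h ha.2).ne

private lemma stmt5_filter_card {f : ℕ → ℚ} {N : ℕ}
    (hf : ∀ i j, 1 ≤ i → i < j → j ≤ N → f j < f i)
    {i : ℕ} (h1 : 1 ≤ i) (h2 : i ≤ N) {c : ℚ} (hc : c = f i) :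
    ((Finset.Icc 1 N).filter fun j => c ≤ f j).card = i := by
  have h : (Finset.Icc 1 N).filter (fun j => c ≤ f j) = Finset.Icc 1 i := by
    ext j
    simp only [Finset.mem_filter, Finset.mem_Icc, hc]
    constructor
    · rintro ⟨⟨hj1, hj2⟩, hle⟩
      exact ⟨hj1, (stmt5_le_iff hf h1 h2 hj1 hj2).1 hle⟩
    · rintro ⟨hj1, hj2⟩
      exact ⟨⟨hj1, hj2.trans h2⟩, (stmt5_le_iff hf h1 h2 hj1 (hj2.trans h2)).2 hj2⟩
  rw [h, Nat.card_Icc]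
  omega


/-- The computational heart of the proof of Lemma 6.2 of the paper: the
Mœglin–Renard signature data `(r_i, s_i)` and the parameter `λ̃'` attached to
the `A`-parameter `φ'` coincide with the data `q`, `λ'` of Theorem 4.1(1). -/
theorem stmt5 (m₀ n₀ : ℤ) (x y z w n : ℕ) (hn : n = x + y + z + w)
    (m r s : ℤ) (hmn : (n : ℤ) < m) (hrsm : r + s = m)
    (hxw : (x : ℤ) + w ≤ r) (hzy : (z : ℤ) + y ≤ s)
    (α β γ δ : ℕ → ℚ)
    (hα : ∀ i j, 1 ≤ i → i < j → j ≤ x → α j < α i)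
    (hβ : ∀ i j, 1 ≤ i → i < j → j ≤ y → β j < β i)
    (hγ : ∀ i j, 1 ≤ i → i < j → j ≤ z → γ j < γ i)
    (hδ : ∀ i j, 1 ≤ i → i < j → j ≤ w → δ j < δ i)
    (hαpos : ∀ i, 1 ≤ i → i ≤ x → 0 < α i)
    (hβnp : ∀ i, 1 ≤ i → i ≤ y → β i ≤ 0)
    (hγpos : ∀ i, 1 ≤ i → i ≤ z → 0 < γ i)
    (hδnp : ∀ i, 1 ≤ i → i ≤ w → δ i ≤ 0)
    (hαβ : ∀ i j, 1 ≤ i → i ≤ x → 1 ≤ j → j ≤ y → α i ≠ β j)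
    (hαγ : ∀ i j, 1 ≤ i → i ≤ x → 1 ≤ j → j ≤ z → α i ≠ γ j)
    (hαδ : ∀ i j, 1 ≤ i → i ≤ x → 1 ≤ j → j ≤ w → α i ≠ δ j)
    (hβγ : ∀ i j, 1 ≤ i → i ≤ y → 1 ≤ j → j ≤ z → β i ≠ γ j)
    (hβδ : ∀ i j, 1 ≤ i → i ≤ y → 1 ≤ j → j ≤ w → β i ≠ δ j)
    (hγδ : ∀ i j, 1 ≤ i → i ≤ z → 1 ≤ j → j ≤ w → γ i ≠ δ j)
    -- κ is the decreasing enumeration of the shifted values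
    (κ : ℕ → ℚ)
    (hκdec : ∀ i j, 1 ≤ i → i < j → j ≤ n → κ j < κ i)
    (hκmem : ∀ i, 1 ≤ i → i ≤ n →
      (∃ j, 1 ≤ j ∧ j ≤ x ∧ κ i = α j + (m₀ : ℚ) / 2) ∨
      (∃ j, 1 ≤ j ∧ j ≤ y ∧ κ i = β j + (m₀ : ℚ) / 2) ∨
      (∃ j, 1 ≤ j ∧ j ≤ z ∧ κ i = γ j + (m₀ : ℚ) / 2) ∨
      (∃ j, 1 ≤ j ∧ j ≤ w ∧ κ i = δ j + (m₀ : ℚ) / 2))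
    (hκα : ∀ j, 1 ≤ j → j ≤ x → ∃ i, 1 ≤ i ∧ i ≤ n ∧ κ i = α j + (m₀ : ℚ) / 2)
    (hκβ : ∀ j, 1 ≤ j → j ≤ y → ∃ i, 1 ≤ i ∧ i ≤ n ∧ κ i = β j + (m₀ : ℚ) / 2)
    (hκγ : ∀ j, 1 ≤ j → j ≤ z → ∃ i, 1 ≤ i ∧ i ≤ n ∧ κ i = γ j + (m₀ : ℚ) / 2)
    (hκδ : ∀ j, 1 ≤ j → j ≤ w → ∃ i, 1 ≤ i ∧ i ≤ n ∧ κ i = δ j + (m₀ : ℚ) / 2)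
    (i0 : ℕ) (hi0 : i0 = x + z + 1)
    -- the signature data (r_i, s_i) for i ≠ i0
    (rr ss : ℕ → ℤ)
    (hrs1 : ∀ i, 1 ≤ i → i ≤ n + 1 → i ≠ i0 →
      ((i < i0 ∧ ∃ j, 1 ≤ j ∧ j ≤ x ∧ κ i - (m₀ : ℚ) / 2 = α j) ∨
        (i0 < i ∧ ∃ l, 1 ≤ l ∧ l ≤ w ∧ κ (i - 1) - (m₀ : ℚ) / 2 = δ l)) →
      rr i = 1 ∧ ss i = 0)
    (hrs0 : ∀ i, 1 ≤ i → i ≤ n + 1 → i ≠ i0 →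
      ¬((i < i0 ∧ ∃ j, 1 ≤ j ∧ j ≤ x ∧ κ i - (m₀ : ℚ) / 2 = α j) ∨
        (i0 < i ∧ ∃ l, 1 ≤ l ∧ l ≤ w ∧ κ (i - 1) - (m₀ : ℚ) / 2 = δ l)) →
      rr i = 0 ∧ ss i = 1)
    (ri0 si0 : ℤ)
    (hri0 : ri0 = r - ∑ i ∈ (Finset.Icc 1 (n + 1)).erase i0, rr i)
    (hsi0 : si0 = s - ∑ i ∈ (Finset.Icc 1 (n + 1)).erase i0, ss i)
    -- the parameter λ̃' (with μ_i = κ_i − m₀/2 + n₀/2 and μ₀ = n₀/2)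
    (lam : ℕ → ℚ)
    (hlam1 : ∀ i, 1 ≤ i → i < i0 →
      lam i = (κ i - (m₀ : ℚ) / 2 + (n₀ : ℚ) / 2) - ((m : ℚ) - 1) / 2 + i - 1)
    (hlam2 : lam i0 = (n₀ : ℚ) / 2 - (n : ℚ) / 2 + i0 - 1)
    (hlam3 : ∀ i, i0 < i → i ≤ n + 1 →
      lam i = (κ (i - 1) - (m₀ : ℚ) / 2 + (n₀ : ℚ) / 2) - ((m : ℚ) - 1) / 2
        + i + (m : ℚ) - n - 2) :
    -- (a)
    (ri0 = r - x - w ∧ si0 = s - z - y) ∧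
    -- (b)
    (∀ i j, 1 ≤ i → i < i0 → 1 ≤ j → j ≤ x → κ i - (m₀ : ℚ) / 2 = α j →
      lam i = α j - ((m : ℚ) + 1) / 2 + j
        + (((Finset.Icc 1 z).filter fun k' => α j < γ k').card : ℚ)
        + (n₀ : ℚ) / 2) ∧
    (∀ i j, 1 ≤ i → i < i0 → 1 ≤ j → j ≤ z → κ i - (m₀ : ℚ) / 2 = γ j →
      lam i = γ j - ((m : ℚ) + 1) / 2 + j
        + (((Finset.Icc 1 x).filter fun i' => γ j < α i').card : ℚ)
        + (n₀ : ℚ) / 2) ∧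
    (lam i0 = (x : ℚ) + (z : ℚ) - (n : ℚ) / 2 + (n₀ : ℚ) / 2) ∧
    (∀ i j, i0 < i → i ≤ n + 1 → 1 ≤ j → j ≤ y → κ (i - 1) - (m₀ : ℚ) / 2 = β j →
      lam i = β j + ((m : ℚ) - 1) / 2 + j - y
        - (((Finset.Icc 1 w).filter fun l => δ l < β j).card : ℚ)
        + (n₀ : ℚ) / 2) ∧
    (∀ i l, i0 < i → i ≤ n + 1 → 1 ≤ l → l ≤ w → κ (i - 1) - (m₀ : ℚ) / 2 = δ l →
      lam i = δ l + ((m : ℚ) - 1) / 2 + l - w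
        - (((Finset.Icc 1 y).filter fun j' => β j' < δ l).card : ℚ)
        + (n₀ : ℚ) / 2) := by

  classical
  set c : ℚ := (m₀ : ℚ) / 2 with hcdef
  -- shifted decreasing families
  have hαc : ∀ i j, 1 ≤ i → i < j → j ≤ x → α j + c < α i + c := by
    intro i j h1 h2 h3; have := hα i j h1 h2 h3; linarith
  have hβc : ∀ i j, 1 ≤ i → i < j → j ≤ y → β j + c < β i + c := by
    intro i j h1 h2 h3; have := hβ i j h1 h2 h3; linarith
  have hγc : ∀ i j, 1 ≤ i → i < j → j ≤ z → γ j + c < γ i + c := by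
    intro i j h1 h2 h3; have := hγ i j h1 h2 h3; linarith
  have hδc : ∀ i j, 1 ≤ i → i < j → j ≤ w → δ j + c < δ i + c := by
    intro i j h1 h2 h3; have := hδ i j h1 h2 h3; linarith
  -- the master counting lemma
  have count : ∀ (p : ℚ → Prop) [DecidablePred p],
      ((Finset.Icc 1 n).filter fun i => p (κ i)).card =
      ((Finset.Icc 1 x).filter fun j => p (α j + c)).card +
      ((Finset.Icc 1 y).filter fun j => p (β j + c)).card +
      ((Finset.Icc 1 z).filter fun j => p (γ j + c)).card +
      ((Finset.Icc 1 w).filter fun j => p (δ j + c)).card := by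
    intro p _
    have himg : ∀ (N : ℕ) (f : ℕ → ℚ),
        (∀ i j, 1 ≤ i → i < j → j ≤ N → f j < f i) →
        (((Finset.Icc 1 N).image f).filter p).card
          = ((Finset.Icc 1 N).filter fun i => p (f i)).card := by
      intro N f hf
      rw [Finset.filter_image]
      exact Finset.card_image_of_injOn
        ((stmt5_injOn hf).mono (Finset.coe_subset.2 (Finset.filter_subset _ _)))
    have hT : (Finset.Icc 1 n).image κ =
        (((Finset.Icc 1 x).image fun j => α j + c) ∪
          ((Finset.Icc 1 y).image fun j => β j + c)) ∪
        (((Finset.Icc 1 z).image fun j => γ j + c) ∪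
          ((Finset.Icc 1 w).image fun j => δ j + c)) := by
      ext a
      simp only [Finset.mem_image, Finset.mem_union, Finset.mem_Icc]
      constructor
      · rintro ⟨i, ⟨hi1, hi2⟩, rfl⟩
        rcases hκmem i hi1 hi2 with ⟨j,h1,h2,hv⟩|⟨j,h1,h2,hv⟩|⟨j,h1,h2,hv⟩|⟨j,h1,h2,hv⟩
        · exact Or.inl (Or.inl ⟨j, ⟨h1, h2⟩, hv.symm⟩)
        · exact Or.inl (Or.inr ⟨j, ⟨h1, h2⟩, hv.symm⟩)
        · exact Or.inr (Or.inl ⟨j, ⟨h1, h2⟩, hv.symm⟩)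
        · exact Or.inr (Or.inr ⟨j, ⟨h1, h2⟩, hv.symm⟩)
      · rintro ((⟨j,⟨h1,h2⟩,rfl⟩|⟨j,⟨h1,h2⟩,rfl⟩)|(⟨j,⟨h1,h2⟩,rfl⟩|⟨j,⟨h1,h2⟩,rfl⟩))
        · obtain ⟨i, hi1, hi2, hv⟩ := hκα j h1 h2
          exact ⟨i, ⟨hi1, hi2⟩, hv⟩
        · obtain ⟨i, hi1, hi2, hv⟩ := hκβ j h1 h2
          exact ⟨i, ⟨hi1, hi2⟩, hv⟩
        · obtain ⟨i, hi1, hi2, hv⟩ := hκγ j h1 h2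
          exact ⟨i, ⟨hi1, hi2⟩, hv⟩
        · obtain ⟨i, hi1, hi2, hv⟩ := hκδ j h1 h2
          exact ⟨i, ⟨hi1, hi2⟩, hv⟩
    have hdisj : ∀ (N M : ℕ) (f g : ℕ → ℚ),
        (∀ i j, 1 ≤ i → i ≤ N → 1 ≤ j → j ≤ M → f i ≠ g j) →
        Disjoint (((Finset.Icc 1 N).image fun j => f j + c).filter p)
                 (((Finset.Icc 1 M).image fun j => g j + c).filter p) := by
      intro N M f g hfg
      apply Finset.disjoint_filter_filter
      rw [Finset.disjoint_left]
      intro a ha hb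
      simp only [Finset.mem_image, Finset.mem_Icc] at ha hb
      obtain ⟨i, ⟨hi1, hi2⟩, rfl⟩ := ha
      obtain ⟨j, ⟨hj1, hj2⟩, he⟩ := hb
      exact hfg i j hi1 hi2 hj1 hj2 (by linarith)
    rw [← himg n κ hκdec, hT, Finset.filter_union, Finset.filter_union, Finset.filter_union,
      Finset.card_union_of_disjoint (by
        simp only [Finset.disjoint_union_left, Finset.disjoint_union_right]
        exact ⟨⟨hdisj _ _ _ _ hαγ, hdisj _ _ _ _ hβγ⟩, ⟨hdisj _ _ _ _ hαδ, hdisj _ _ _ _ hβδ⟩⟩),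
      Finset.card_union_of_disjoint (hdisj _ _ _ _ hαβ),
      Finset.card_union_of_disjoint (hdisj _ _ _ _ hγδ),
      himg x _ hαc, himg y _ hβc, himg z _ hγc, himg w _ hδc]
    ring
  -- positivity threshold: κ i > c iff i ≤ x + z
  have thresh : ∀ i, 1 ≤ i → i ≤ n → (c < κ i ↔ i ≤ x + z) := by
    have hcount : ((Finset.Icc 1 n).filter fun i => c < κ i).card = x + z := by
      have hh : ((Finset.Icc 1 n).filter fun i => c < κ i).card =
          ((Finset.Icc 1 x).filter fun j => c < α j + c).card +
          ((Finset.Icc 1 y).filter fun j => c < β j + c).card +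
          ((Finset.Icc 1 z).filter fun j => c < γ j + c).card +
          ((Finset.Icc 1 w).filter fun j => c < δ j + c).card :=
        count (fun t => c < t)
      have eA : ((Finset.Icc 1 x).filter fun j => c < α j + c) = Finset.Icc 1 x :=
        Finset.filter_true_of_mem (by
          intro j hj; simp only [Finset.mem_Icc] at hj
          have := hαpos j hj.1 hj.2; linarith)
      have eB : ((Finset.Icc 1 y).filter fun j => c < β j + c) = ∅ := by
        rw [Finset.filter_eq_empty_iff]
        intro j hj; simp only [Finset.mem_Icc] at hj
        have := hβnp j hj.1 hj.2; intro hcon; linarith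
      have eC : ((Finset.Icc 1 z).filter fun j => c < γ j + c) = Finset.Icc 1 z :=
        Finset.filter_true_of_mem (by
          intro j hj; simp only [Finset.mem_Icc] at hj
          have := hγpos j hj.1 hj.2; linarith)
      have eD : ((Finset.Icc 1 w).filter fun j => c < δ j + c) = ∅ := by
        rw [Finset.filter_eq_empty_iff]
        intro j hj; simp only [Finset.mem_Icc] at hj
        have := hδnp j hj.1 hj.2; intro hcon; linarith
      rw [eA, eB, eC, eD, Finset.card_empty, Nat.card_Icc, Nat.card_Icc] at hh
      omega
    have hsub : (Finset.Icc 1 n).filter (fun i => c < κ i) ⊆ Finset.Icc 1 (x + z) := by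
      intro i hi
      simp only [Finset.mem_filter, Finset.mem_Icc] at hi ⊢
      refine ⟨hi.1.1, ?_⟩
      by_contra hgt
      push_neg at hgt
      have hsub2 : Finset.Icc 1 i ⊆ (Finset.Icc 1 n).filter (fun i => c < κ i) := by
        intro i' hi'
        simp only [Finset.mem_Icc] at hi'
        simp only [Finset.mem_filter, Finset.mem_Icc]
        refine ⟨⟨hi'.1, le_trans hi'.2 hi.1.2⟩, ?_⟩
        rcases eq_or_lt_of_le hi'.2 with h | h
        · rw [h]; exact hi.2
        · exact lt_trans hi.2 (hκdec i' i hi'.1 h hi.1.2)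
      have hle := Finset.card_le_card hsub2
      rw [hcount, Nat.card_Icc] at hle
      omega
    have heq : (Finset.Icc 1 n).filter (fun i => c < κ i) = Finset.Icc 1 (x + z) := by
      apply Finset.eq_of_subset_of_card_le hsub
      rw [hcount, Nat.card_Icc]; omega
    intro i h1 h2
    constructor
    · intro h
      have hmem : i ∈ Finset.Icc 1 (x + z) :=
        heq ▸ (Finset.mem_filter.2 ⟨Finset.mem_Icc.2 ⟨h1, h2⟩, h⟩)
      exact (Finset.mem_Icc.1 hmem).2
    · intro h
      have hmem : i ∈ (Finset.Icc 1 n).filter (fun i => c < κ i) :=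
        heq.symm ▸ (Finset.mem_Icc.2 ⟨h1, h⟩)
      exact (Finset.mem_filter.1 hmem).2
  -- index = rank computations for each family
  have idxα : ∀ i j, 1 ≤ i → i ≤ n → 1 ≤ j → j ≤ x → κ i - c = α j →
      i = j + ((Finset.Icc 1 z).filter fun k' => α j < γ k').card := by
    intro i j hi1 hi2 hj1 hj2 hv
    have hvi : κ i = α j + c := by linarith
    have e12 : ((Finset.Icc 1 n).filter fun i' => κ i ≤ κ i').card = i :=
      stmt5_filter_card hκdec hi1 hi2 rfl
    have h1 : i =
        ((Finset.Icc 1 x).filter fun j' => κ i ≤ α j' + c).card +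
        ((Finset.Icc 1 y).filter fun j' => κ i ≤ β j' + c).card +
        ((Finset.Icc 1 z).filter fun k' => κ i ≤ γ k' + c).card +
        ((Finset.Icc 1 w).filter fun l => κ i ≤ δ l + c).card := by
      exact e12.symm.trans (count (fun t => κ i ≤ t))
    have hA : ((Finset.Icc 1 x).filter fun j' => κ i ≤ α j' + c).card = j :=
      stmt5_filter_card hαc hj1 hj2 hvi
    have hB : ((Finset.Icc 1 y).filter fun j' => κ i ≤ β j' + c) = ∅ := by
      rw [Finset.filter_eq_empty_iff]
      intro j' hj'
      simp only [Finset.mem_Icc] at hj'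
      have h1' := hβnp j' hj'.1 hj'.2
      have h2' := hαpos j hj1 hj2
      rw [hvi]; intro hcon; linarith
    have hC : ((Finset.Icc 1 z).filter fun k' => κ i ≤ γ k' + c)
        = (Finset.Icc 1 z).filter fun k' => α j < γ k' := by
      apply Finset.filter_congr
      intro k hk
      simp only [Finset.mem_Icc] at hk
      rw [hvi]
      constructor
      · intro h
        exact lt_of_le_of_ne (by linarith) (hαγ j k hj1 hj2 hk.1 hk.2)
      · intro h; linarith
    have hD : ((Finset.Icc 1 w).filter fun l => κ i ≤ δ l + c) = ∅ := by
      rw [Finset.filter_eq_empty_iff]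
      intro l hl
      simp only [Finset.mem_Icc] at hl
      have h1' := hδnp l hl.1 hl.2
      have h2' := hαpos j hj1 hj2
      rw [hvi]; intro hcon; linarith
    rw [hA, hB, hC, hD, Finset.card_empty] at h1
    omega
  have idxγ : ∀ i k, 1 ≤ i → i ≤ n → 1 ≤ k → k ≤ z → κ i - c = γ k →
      i = k + ((Finset.Icc 1 x).filter fun i' => γ k < α i').card := by
    intro i k hi1 hi2 hk1 hk2 hv
    have hvi : κ i = γ k + c := by linarith
    have e12 : ((Finset.Icc 1 n).filter fun i' => κ i ≤ κ i').card = i :=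
      stmt5_filter_card hκdec hi1 hi2 rfl
    have h1 : i =
        ((Finset.Icc 1 x).filter fun j' => κ i ≤ α j' + c).card +
        ((Finset.Icc 1 y).filter fun j' => κ i ≤ β j' + c).card +
        ((Finset.Icc 1 z).filter fun k' => κ i ≤ γ k' + c).card +
        ((Finset.Icc 1 w).filter fun l => κ i ≤ δ l + c).card := by
      exact e12.symm.trans (count (fun t => κ i ≤ t))
    have hA : ((Finset.Icc 1 x).filter fun j' => κ i ≤ α j' + c)
        = (Finset.Icc 1 x).filter fun i' => γ k < α i' := by
      apply Finset.filter_congr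
      intro j hj
      simp only [Finset.mem_Icc] at hj
      rw [hvi]
      constructor
      · intro h
        exact lt_of_le_of_ne (by linarith) (Ne.symm (hαγ j k hj.1 hj.2 hk1 hk2))
      · intro h; linarith
    have hB : ((Finset.Icc 1 y).filter fun j' => κ i ≤ β j' + c) = ∅ := by
      rw [Finset.filter_eq_empty_iff]
      intro j' hj'
      simp only [Finset.mem_Icc] at hj'
      have h1' := hβnp j' hj'.1 hj'.2
      have h2' := hγpos k hk1 hk2
      rw [hvi]; intro hcon; linarith
    have hC : ((Finset.Icc 1 z).filter fun k' => κ i ≤ γ k' + c).card = k :=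
      stmt5_filter_card hγc hk1 hk2 hvi
    have hD : ((Finset.Icc 1 w).filter fun l => κ i ≤ δ l + c) = ∅ := by
      rw [Finset.filter_eq_empty_iff]
      intro l hl
      simp only [Finset.mem_Icc] at hl
      have h1' := hδnp l hl.1 hl.2
      have h2' := hγpos k hk1 hk2
      rw [hvi]; intro hcon; linarith
    rw [hB, hC, hD, hA, Finset.card_empty] at h1
    omega
  have idxβ : ∀ i j, 1 ≤ i → i ≤ n → 1 ≤ j → j ≤ y → κ i - c = β j →
      i + ((Finset.Icc 1 w).filter fun l => δ l < β j).card = x + j + z + w := by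
    intro i j hi1 hi2 hj1 hj2 hv
    have hvi : κ i = β j + c := by linarith
    have e12 : ((Finset.Icc 1 n).filter fun i' => κ i ≤ κ i').card = i :=
      stmt5_filter_card hκdec hi1 hi2 rfl
    have h1 : i =
        ((Finset.Icc 1 x).filter fun j' => κ i ≤ α j' + c).card +
        ((Finset.Icc 1 y).filter fun j' => κ i ≤ β j' + c).card +
        ((Finset.Icc 1 z).filter fun k' => κ i ≤ γ k' + c).card +
        ((Finset.Icc 1 w).filter fun l => κ i ≤ δ l + c).card := by
      exact e12.symm.trans (count (fun t => κ i ≤ t))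
    have hA : ((Finset.Icc 1 x).filter fun j' => κ i ≤ α j' + c) = Finset.Icc 1 x :=
      Finset.filter_true_of_mem (by
        intro j' hj'
        simp only [Finset.mem_Icc] at hj'
        have h1' := hαpos j' hj'.1 hj'.2
        have h2' := hβnp j hj1 hj2
        rw [hvi]; linarith)
    have hB : ((Finset.Icc 1 y).filter fun j' => κ i ≤ β j' + c).card = j :=
      stmt5_filter_card hβc hj1 hj2 hvi
    have hC : ((Finset.Icc 1 z).filter fun k' => κ i ≤ γ k' + c) = Finset.Icc 1 z :=
      Finset.filter_true_of_mem (by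
        intro k hk
        simp only [Finset.mem_Icc] at hk
        have h1' := hγpos k hk.1 hk.2
        have h2' := hβnp j hj1 hj2
        rw [hvi]; linarith)
    have hD : ((Finset.Icc 1 w).filter fun l => κ i ≤ δ l + c)
        = (Finset.Icc 1 w).filter fun l => ¬ (δ l < β j) := by
      apply Finset.filter_congr
      intro l hl
      rw [hvi, not_lt]
      constructor
      · intro h; linarith
      · intro h; linarith
    have hsplit :
        ((Finset.Icc 1 w).filter fun l => δ l < β j).card +
          ((Finset.Icc 1 w).filter fun l => ¬ (δ l < β j)).card = w := by
      rw [Finset.card_filter_add_card_filter_not, Nat.card_Icc]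
      omega
    rw [hA, hB, hC, hD] at h1
    rw [Nat.card_Icc, Nat.card_Icc] at h1
    omega
  have idxδ : ∀ i l, 1 ≤ i → i ≤ n → 1 ≤ l → l ≤ w → κ i - c = δ l →
      i + ((Finset.Icc 1 y).filter fun j' => β j' < δ l).card = x + y + z + l := by
    intro i l hi1 hi2 hl1 hl2 hv
    have hvi : κ i = δ l + c := by linarith
    have e12 : ((Finset.Icc 1 n).filter fun i' => κ i ≤ κ i').card = i :=
      stmt5_filter_card hκdec hi1 hi2 rfl
    have h1 : i =
        ((Finset.Icc 1 x).filter fun j' => κ i ≤ α j' + c).card +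
        ((Finset.Icc 1 y).filter fun j' => κ i ≤ β j' + c).card +
        ((Finset.Icc 1 z).filter fun k' => κ i ≤ γ k' + c).card +
        ((Finset.Icc 1 w).filter fun l' => κ i ≤ δ l' + c).card := by
      exact e12.symm.trans (count (fun t => κ i ≤ t))
    have hA : ((Finset.Icc 1 x).filter fun j' => κ i ≤ α j' + c) = Finset.Icc 1 x :=
      Finset.filter_true_of_mem (by
        intro j' hj'
        simp only [Finset.mem_Icc] at hj'
        have h1' := hαpos j' hj'.1 hj'.2
        have h2' := hδnp l hl1 hl2
        rw [hvi]; linarith)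
    have hB : ((Finset.Icc 1 y).filter fun j' => κ i ≤ β j' + c)
        = (Finset.Icc 1 y).filter fun j' => ¬ (β j' < δ l) := by
      apply Finset.filter_congr
      intro j hj
      rw [hvi, not_lt]
      constructor
      · intro h; linarith
      · intro h; linarith
    have hC : ((Finset.Icc 1 z).filter fun k' => κ i ≤ γ k' + c) = Finset.Icc 1 z :=
      Finset.filter_true_of_mem (by
        intro k hk
        simp only [Finset.mem_Icc] at hk
        have h1' := hγpos k hk.1 hk.2
        have h2' := hδnp l hl1 hl2
        rw [hvi]; linarith)
    have hD : ((Finset.Icc 1 w).filter fun l' => κ i ≤ δ l' + c).card = l :=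
      stmt5_filter_card hδc hl1 hl2 hvi
    have hsplit :
        ((Finset.Icc 1 y).filter fun j' => β j' < δ l).card +
          ((Finset.Icc 1 y).filter fun j' => ¬ (β j' < δ l)).card = y := by
      rw [Finset.card_filter_add_card_filter_not, Nat.card_Icc]
      omega
    rw [hA, hB, hC, hD] at h1
    rw [Nat.card_Icc, Nat.card_Icc] at h1
    omega
  -- cardinalities for part (a)
  have hcardα : ((Finset.Icc 1 n).filter fun i => ∃ j, 1 ≤ j ∧ j ≤ x ∧ κ i - c = α j).card
      = x := by
    have h1 : ((Finset.Icc 1 n).filter fun i => ∃ j, 1 ≤ j ∧ j ≤ x ∧ κ i - c = α j).card =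
        ((Finset.Icc 1 x).filter fun j' => ∃ j, 1 ≤ j ∧ j ≤ x ∧ (α j' + c) - c = α j).card +
        ((Finset.Icc 1 y).filter fun j' => ∃ j, 1 ≤ j ∧ j ≤ x ∧ (β j' + c) - c = α j).card +
        ((Finset.Icc 1 z).filter fun k' => ∃ j, 1 ≤ j ∧ j ≤ x ∧ (γ k' + c) - c = α j).card +
        ((Finset.Icc 1 w).filter fun l => ∃ j, 1 ≤ j ∧ j ≤ x ∧ (δ l + c) - c = α j).card :=
      count (fun t => ∃ j, 1 ≤ j ∧ j ≤ x ∧ t - c = α j)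
    have hA : ((Finset.Icc 1 x).filter fun j' => ∃ j, 1 ≤ j ∧ j ≤ x ∧ (α j' + c) - c = α j)
        = Finset.Icc 1 x :=
      Finset.filter_true_of_mem (by
        intro j' hj'
        simp only [Finset.mem_Icc] at hj'
        exact ⟨j', hj'.1, hj'.2, by ring⟩)
    have hB : ((Finset.Icc 1 y).filter fun j' => ∃ j, 1 ≤ j ∧ j ≤ x ∧ (β j' + c) - c = α j)
        = ∅ := by
      rw [Finset.filter_eq_empty_iff]
      intro j' hj'
      simp only [Finset.mem_Icc] at hj'
      rintro ⟨j, hj1, hj2, hveq⟩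
      exact hαβ j j' hj1 hj2 hj'.1 hj'.2 (by linarith)
    have hC : ((Finset.Icc 1 z).filter fun k' => ∃ j, 1 ≤ j ∧ j ≤ x ∧ (γ k' + c) - c = α j)
        = ∅ := by
      rw [Finset.filter_eq_empty_iff]
      intro k' hk'
      simp only [Finset.mem_Icc] at hk'
      rintro ⟨j, hj1, hj2, hveq⟩
      exact hαγ j k' hj1 hj2 hk'.1 hk'.2 (by linarith)
    have hD : ((Finset.Icc 1 w).filter fun l => ∃ j, 1 ≤ j ∧ j ≤ x ∧ (δ l + c) - c = α j)
        = ∅ := by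
      rw [Finset.filter_eq_empty_iff]
      intro l hl
      simp only [Finset.mem_Icc] at hl
      rintro ⟨j, hj1, hj2, hveq⟩
      exact hαδ j l hj1 hj2 hl.1 hl.2 (by linarith)
    rw [hA, hB, hC, hD, Finset.card_empty, Nat.card_Icc] at h1
    omega
  have hcardδ : ((Finset.Icc 1 n).filter fun i => ∃ l, 1 ≤ l ∧ l ≤ w ∧ κ i - c = δ l).card
      = w := by
    have h1 : ((Finset.Icc 1 n).filter fun i => ∃ l, 1 ≤ l ∧ l ≤ w ∧ κ i - c = δ l).card =
        ((Finset.Icc 1 x).filter fun j' => ∃ l, 1 ≤ l ∧ l ≤ w ∧ (α j' + c) - c = δ l).card +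
        ((Finset.Icc 1 y).filter fun j' => ∃ l, 1 ≤ l ∧ l ≤ w ∧ (β j' + c) - c = δ l).card +
        ((Finset.Icc 1 z).filter fun k' => ∃ l, 1 ≤ l ∧ l ≤ w ∧ (γ k' + c) - c = δ l).card +
        ((Finset.Icc 1 w).filter fun l' => ∃ l, 1 ≤ l ∧ l ≤ w ∧ (δ l' + c) - c = δ l).card :=
      count (fun t => ∃ l, 1 ≤ l ∧ l ≤ w ∧ t - c = δ l)
    have hA : ((Finset.Icc 1 x).filter fun j' => ∃ l, 1 ≤ l ∧ l ≤ w ∧ (α j' + c) - c = δ l)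
        = ∅ := by
      rw [Finset.filter_eq_empty_iff]
      intro j' hj'
      simp only [Finset.mem_Icc] at hj'
      rintro ⟨l, hl1, hl2, hveq⟩
      exact hαδ j' l hj'.1 hj'.2 hl1 hl2 (by linarith)
    have hB : ((Finset.Icc 1 y).filter fun j' => ∃ l, 1 ≤ l ∧ l ≤ w ∧ (β j' + c) - c = δ l)
        = ∅ := by
      rw [Finset.filter_eq_empty_iff]
      intro j' hj'
      simp only [Finset.mem_Icc] at hj'
      rintro ⟨l, hl1, hl2, hveq⟩
      exact hβδ j' l hj'.1 hj'.2 hl1 hl2 (by linarith)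
    have hC : ((Finset.Icc 1 z).filter fun k' => ∃ l, 1 ≤ l ∧ l ≤ w ∧ (γ k' + c) - c = δ l)
        = ∅ := by
      rw [Finset.filter_eq_empty_iff]
      intro k' hk'
      simp only [Finset.mem_Icc] at hk'
      rintro ⟨l, hl1, hl2, hveq⟩
      exact hγδ k' l hk'.1 hk'.2 hl1 hl2 (by linarith)
    have hD : ((Finset.Icc 1 w).filter fun l' => ∃ l, 1 ≤ l ∧ l ≤ w ∧ (δ l' + c) - c = δ l)
        = Finset.Icc 1 w :=
      Finset.filter_true_of_mem (by
        intro l' hl'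
        simp only [Finset.mem_Icc] at hl'
        exact ⟨l', hl'.1, hl'.2, by ring⟩)
    rw [hA, hB, hC, hD, Finset.card_empty, Nat.card_Icc] at h1
    omega
  have hreα : ((Finset.Icc 1 (x + z)).filter fun i => ∃ j, 1 ≤ j ∧ j ≤ x ∧ κ i - c = α j)
      = ((Finset.Icc 1 n).filter fun i => ∃ j, 1 ≤ j ∧ j ≤ x ∧ κ i - c = α j) := by
    ext a
    simp only [Finset.mem_filter, Finset.mem_Icc]
    constructor
    · rintro ⟨⟨h1, h2⟩, hex⟩
      exact ⟨⟨h1, by omega⟩, hex⟩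
    · rintro ⟨⟨h1, h2⟩, hex⟩
      obtain ⟨j, hj1, hj2, hveq⟩ := hex
      have hgt : c < κ a := by have := hαpos j hj1 hj2; linarith
      exact ⟨⟨h1, (thresh a h1 h2).1 hgt⟩, ⟨j, hj1, hj2, hveq⟩⟩
  have hreδ : ((Finset.Icc (x + z + 1) n).filter fun i => ∃ l, 1 ≤ l ∧ l ≤ w ∧ κ i - c = δ l)
      = ((Finset.Icc 1 n).filter fun i => ∃ l, 1 ≤ l ∧ l ≤ w ∧ κ i - c = δ l) := by
    ext a
    simp only [Finset.mem_filter, Finset.mem_Icc]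
    constructor
    · rintro ⟨⟨h1, h2⟩, hex⟩
      exact ⟨⟨by omega, h2⟩, hex⟩
    · rintro ⟨⟨h1, h2⟩, hex⟩
      obtain ⟨l, hl1, hl2, hveq⟩ := hex
      have hle : ¬ c < κ a := by have := hδnp l hl1 hl2; linarith
      have hgt : ¬ a ≤ x + z := fun hcon => hle ((thresh a h1 h2).2 hcon)
      exact ⟨⟨by omega, h2⟩, l, hl1, hl2, hveq⟩
  have hshift : ((Finset.Icc (x + z + 2) (n + 1)).filter
        fun i => ∃ l, 1 ≤ l ∧ l ≤ w ∧ κ (i - 1) - c = δ l)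
      = ((Finset.Icc (x + z + 1) n).filter
        fun i => ∃ l, 1 ≤ l ∧ l ≤ w ∧ κ i - c = δ l).image (· + 1) := by
    ext a
    simp only [Finset.mem_filter, Finset.mem_Icc, Finset.mem_image]
    constructor
    · rintro ⟨⟨h1, h2⟩, hex⟩
      exact ⟨a - 1, ⟨⟨by omega, by omega⟩, hex⟩, by omega⟩
    · rintro ⟨b, ⟨⟨h1, h2⟩, hex⟩, rfl⟩
      refine ⟨⟨by omega, by omega⟩, ?_⟩
      simpa using hex
  have hsum_rr : ∑ i ∈ (Finset.Icc 1 (n + 1)).erase i0, rr i = (x : ℤ) + (w : ℤ) := by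
    have hEsplit : (Finset.Icc 1 (n + 1)).erase i0
        = Finset.Icc 1 (x + z) ∪ Finset.Icc (x + z + 2) (n + 1) := by
      ext a
      simp only [Finset.mem_erase, Finset.mem_Icc, Finset.mem_union, hi0]
      omega
    have hdisjE : Disjoint (Finset.Icc 1 (x + z)) (Finset.Icc (x + z + 2) (n + 1)) := by
      rw [Finset.disjoint_left]
      intro a ha hb
      simp only [Finset.mem_Icc] at ha hb
      omega
    rw [hEsplit, Finset.sum_union hdisjE]
    have hp1 : ∀ i ∈ Finset.Icc 1 (x + z),
        rr i = if ∃ j, 1 ≤ j ∧ j ≤ x ∧ κ i - c = α j then 1 else 0 := by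
      intro i hi
      simp only [Finset.mem_Icc] at hi
      by_cases hcase : ∃ j, 1 ≤ j ∧ j ≤ x ∧ κ i - c = α j
      · rw [if_pos hcase]
        exact (hrs1 i hi.1 (by omega) (by omega) (Or.inl ⟨by omega, hcase⟩)).1
      · rw [if_neg hcase]
        refine (hrs0 i hi.1 (by omega) (by omega) ?_).1
        rintro (⟨_, hcon⟩ | ⟨hcon, _⟩)
        · exact hcase hcon
        · omega
    have hp2 : ∀ i ∈ Finset.Icc (x + z + 2) (n + 1),
        rr i = if ∃ l, 1 ≤ l ∧ l ≤ w ∧ κ (i - 1) - c = δ l then 1 else 0 := by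
      intro i hi
      simp only [Finset.mem_Icc] at hi
      by_cases hcase : ∃ l, 1 ≤ l ∧ l ≤ w ∧ κ (i - 1) - c = δ l
      · rw [if_pos hcase]
        exact (hrs1 i (by omega) hi.2 (by omega) (Or.inr ⟨by omega, hcase⟩)).1
      · rw [if_neg hcase]
        refine (hrs0 i (by omega) hi.2 (by omega) ?_).1
        rintro (⟨hcon, _⟩ | ⟨_, hcon⟩)
        · omega
        · exact hcase hcon
    rw [Finset.sum_congr rfl hp1, Finset.sum_congr rfl hp2, Finset.sum_boole, Finset.sum_boole,
      hreα, hcardα, hshift, Finset.card_image_of_injective _ (add_left_injective 1), hreδ,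
      hcardδ]
  have hsum_ss : ∑ i ∈ (Finset.Icc 1 (n + 1)).erase i0, ss i = (z : ℤ) + (y : ℤ) := by
    have hpt : ∀ i ∈ (Finset.Icc 1 (n + 1)).erase i0, ss i = 1 - rr i := by
      intro i hi
      simp only [Finset.mem_erase, Finset.mem_Icc] at hi
      by_cases hcase : ((i < i0 ∧ ∃ j, 1 ≤ j ∧ j ≤ x ∧ κ i - c = α j) ∨
          (i0 < i ∧ ∃ l, 1 ≤ l ∧ l ≤ w ∧ κ (i - 1) - c = δ l))
      · obtain ⟨e1, e2⟩ := hrs1 i hi.2.1 hi.2.2 hi.1 hcase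
        omega
      · obtain ⟨e1, e2⟩ := hrs0 i hi.2.1 hi.2.2 hi.1 hcase
        omega
    rw [Finset.sum_congr rfl hpt, Finset.sum_sub_distrib, Finset.sum_const, hsum_rr]
    have hcardE : ((Finset.Icc 1 (n + 1)).erase i0).card = n := by
      rw [Finset.card_erase_of_mem (Finset.mem_Icc.2 ⟨by omega, by omega⟩), Nat.card_Icc]
      omega
    rw [hcardE, nsmul_eq_mul]
    push_cast
    omega
  refine ⟨⟨?_, ?_⟩, ?_, ?_, ?_, ?_, ?_⟩
  · rw [hri0, hsum_rr]; ring
  · rw [hsi0, hsum_ss]; ring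
  · -- α case
    intro i j hi1 hii0 hj1 hj2 hv
    have hi2 : i ≤ n := by omega
    have hkey := idxα i j hi1 hi2 hj1 hj2 hv
    have hkeyQ : (i : ℚ) = (j : ℚ)
        + (((Finset.Icc 1 z).filter fun k' => α j < γ k').card : ℚ) := by
      exact_mod_cast hkey
    rw [hlam1 i hi1 hii0, hv, hkeyQ]
    ring
  · -- γ case
    intro i k hi1 hii0 hk1 hk2 hv
    have hi2 : i ≤ n := by omega
    have hkey := idxγ i k hi1 hi2 hk1 hk2 hv
    have hkeyQ : (i : ℚ) = (k : ℚ)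
        + (((Finset.Icc 1 x).filter fun i' => γ k < α i').card : ℚ) := by
      exact_mod_cast hkey
    rw [hlam1 i hi1 hii0, hv, hkeyQ]
    ring
  · -- i0 case
    rw [hlam2, hi0]
    push_cast
    ring
  · -- β case
    intro i j hii0 hin hj1 hj2 hv
    have h1' : 1 ≤ i - 1 := by omega
    have h2' : i - 1 ≤ n := by omega
    have hkey := idxβ (i - 1) j h1' h2' hj1 hj2 hv
    have hkey2 : i + ((Finset.Icc 1 w).filter fun l => δ l < β j).card
        = x + j + z + w + 1 := by omega
    have hkeyQ : (i : ℚ) + (((Finset.Icc 1 w).filter fun l => δ l < β j).card : ℚ)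
        = (x : ℚ) + j + z + w + 1 := by exact_mod_cast hkey2
    have hnQ : (n : ℚ) = (x : ℚ) + y + z + w := by exact_mod_cast hn
    rw [hlam3 i hii0 hin, hv]
    linarith [hkeyQ, hnQ]
  · -- δ case
    intro i l hii0 hin hl1 hl2 hv
    have h1' : 1 ≤ i - 1 := by omega
    have h2' : i - 1 ≤ n := by omega
    have hkey := idxδ (i - 1) l h1' h2' hl1 hl2 hv
    have hkey2 : i + ((Finset.Icc 1 y).filter fun j' => β j' < δ l).card
        = x + y + z + l + 1 := by omega
    have hkeyQ : (i : ℚ) + (((Finset.Icc 1 y).filter fun j' => β j' < δ l).card : ℚ)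
        = (x : ℚ) + y + z + l + 1 := by exact_mod_cast hkey2
    have hnQ : (n : ℚ) = (x : ℚ) + y + z + w := by exact_mod_cast hn
    rw [hlam3 i hii0 hin, hv]
    linarith [hkeyQ, hnQ]
end

section
/- Let x, y, z, w be nonnegative integers, put n = x + y + z + w, and let m, r, s be integers with m > n, r + s = m, r ≥ x + w, s ≥ z + y. Let α₁ > ⋯ > α_x > 0 ≥ β₁ > ⋯ > β_y and γ₁ > ⋯ > γ_z > 0 ≥ δ₁ > ⋯ > δ_w be rational numbers, pairwise distinct as a list of n numbers, any two of which differ by an integer. Let v₁ > ⋯ > v_{x+z} be the decreasing enumeration of the α's and γ's, and u₁ > ⋯ > u_{y+w} the decreasing enumeration of the β's and δ's. Define a sequence of block values: Λ_R = v_R − (m+1)/2 + R for 1 ≤ R ≤ x+z, then Λ_{x+z+1} = x + z − n/2, then Λ_{x+z+1+R'} = u_{R'} + (m−1)/2 + R' − (y+w) for 1 ≤ R' ≤ y+w; and assign block sizes d_R = 1 for R ≠ x+z+1 and d_{x+z+1} = m−n. Then for every consecutive pair of blocks, Λ_i − Λ_{i+1} ≥ −(d_i + d_{i+1})/2. -/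
/-- The verification that the parameter `λ'` of Theorem 4.1(1) is in the weakly
fair range: for consecutive Levi blocks, `Λ_i − Λ_{i+1} ≥ −(d_i + d_{i+1})/2`. -/
theorem stmt6 (x y z w n : ℕ) (hn : n = x + y + z + w)
    (m r s : ℤ) (hmn : (n : ℤ) < m) (hrsm : r + s = m)
    (hxw : (x : ℤ) + w ≤ r) (hzy : (z : ℤ) + y ≤ s)
    (α β γ δ : ℕ → ℚ)
    (hα : ∀ i j, 1 ≤ i → i < j → j ≤ x → α j < α i)
    (hβ : ∀ i j, 1 ≤ i → i < j → j ≤ y → β j < β i)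
    (hγ : ∀ i j, 1 ≤ i → i < j → j ≤ z → γ j < γ i)
    (hδ : ∀ i j, 1 ≤ i → i < j → j ≤ w → δ j < δ i)
    (hαpos : ∀ i, 1 ≤ i → i ≤ x → 0 < α i)
    (hβnp : ∀ i, 1 ≤ i → i ≤ y → β i ≤ 0)
    (hγpos : ∀ i, 1 ≤ i → i ≤ z → 0 < γ i)
    (hδnp : ∀ i, 1 ≤ i → i ≤ w → δ i ≤ 0)
    (hαβ : ∀ i j, 1 ≤ i → i ≤ x → 1 ≤ j → j ≤ y → α i ≠ β j)
    (hαγ : ∀ i j, 1 ≤ i → i ≤ x → 1 ≤ j → j ≤ z → α i ≠ γ j)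
    (hαδ : ∀ i j, 1 ≤ i → i ≤ x → 1 ≤ j → j ≤ w → α i ≠ δ j)
    (hβγ : ∀ i j, 1 ≤ i → i ≤ y → 1 ≤ j → j ≤ z → β i ≠ γ j)
    (hβδ : ∀ i j, 1 ≤ i → i ≤ y → 1 ≤ j → j ≤ w → β i ≠ δ j)
    (hγδ : ∀ i j, 1 ≤ i → i ≤ z → 1 ≤ j → j ≤ w → γ i ≠ δ j)
    -- any two of the n numbers differ by an integer
    (hint : ∀ a b : ℚ,
      ((∃ i, 1 ≤ i ∧ i ≤ x ∧ a = α i) ∨ (∃ i, 1 ≤ i ∧ i ≤ y ∧ a = β i) ∨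
        (∃ i, 1 ≤ i ∧ i ≤ z ∧ a = γ i) ∨ (∃ i, 1 ≤ i ∧ i ≤ w ∧ a = δ i)) →
      ((∃ i, 1 ≤ i ∧ i ≤ x ∧ b = α i) ∨ (∃ i, 1 ≤ i ∧ i ≤ y ∧ b = β i) ∨
        (∃ i, 1 ≤ i ∧ i ≤ z ∧ b = γ i) ∨ (∃ i, 1 ≤ i ∧ i ≤ w ∧ b = δ i)) →
      ∃ t : ℤ, a - b = t)
    -- v is the decreasing enumeration of the α's and γ's
    (v : ℕ → ℚ)
    (hvdec : ∀ i j, 1 ≤ i → i < j → j ≤ x + z → v j < v i)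
    (hvmem : ∀ i, 1 ≤ i → i ≤ x + z →
      (∃ j, 1 ≤ j ∧ j ≤ x ∧ v i = α j) ∨ (∃ j, 1 ≤ j ∧ j ≤ z ∧ v i = γ j))
    (hvα : ∀ j, 1 ≤ j → j ≤ x → ∃ i, 1 ≤ i ∧ i ≤ x + z ∧ v i = α j)
    (hvγ : ∀ j, 1 ≤ j → j ≤ z → ∃ i, 1 ≤ i ∧ i ≤ x + z ∧ v i = γ j)
    -- u is the decreasing enumeration of the β's and δ's
    (u : ℕ → ℚ)
    (hudec : ∀ i j, 1 ≤ i → i < j → j ≤ y + w → u j < u i)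
    (humem : ∀ i, 1 ≤ i → i ≤ y + w →
      (∃ j, 1 ≤ j ∧ j ≤ y ∧ u i = β j) ∨ (∃ j, 1 ≤ j ∧ j ≤ w ∧ u i = δ j))
    (huβ : ∀ j, 1 ≤ j → j ≤ y → ∃ i, 1 ≤ i ∧ i ≤ y + w ∧ u i = β j)
    (huδ : ∀ j, 1 ≤ j → j ≤ w → ∃ i, 1 ≤ i ∧ i ≤ y + w ∧ u i = δ j)
    -- the block values Λ and block sizes d
    (L d : ℕ → ℚ)
    (hL1 : ∀ R, 1 ≤ R → R ≤ x + z → L R = v R - ((m : ℚ) + 1) / 2 + R)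
    (hL2 : L (x + z + 1) = (x : ℚ) + (z : ℚ) - (n : ℚ) / 2)
    (hL3 : ∀ R', 1 ≤ R' → R' ≤ y + w →
      L (x + z + 1 + R') = u R' + ((m : ℚ) - 1) / 2 + R' - ((y : ℚ) + w))
    (hd1 : ∀ R, 1 ≤ R → R ≤ x + z + 1 + (y + w) → R ≠ x + z + 1 → d R = 1)
    (hd2 : d (x + z + 1) = (m : ℚ) - (n : ℚ)) :
    ∀ R, 1 ≤ R → R < x + z + 1 + (y + w) →
      L R - L (R + 1) ≥ -(d R + d (R + 1)) / 2 := by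

  intro R hR1 hR2
  rcases lt_or_ge R (x+z) with hA | hB
  · -- both singletons in v-range
    have h1 := hL1 R hR1 (by omega)
    have h2 := hL1 (R+1) (by omega) (by omega)
    have hv := hvdec R (R+1) hR1 (by omega) (by omega)
    have hd := hd1 R hR1 (by omega) (by omega)
    have hd' := hd1 (R+1) (by omega) (by omega) (by omega)
    rw [h1, h2, hd, hd']
    push_cast
    linarith
  rcases eq_or_lt_of_le hB with hB | hC
  · -- R = x+z : transition to the big block
    have h1 := hL1 R hR1 (le_of_eq hB.symm)
    have hR1' : R + 1 = x + z + 1 := by omega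
    have hd := hd1 R hR1 (by omega) (by omega)
    have hvpos : 0 < v R := by
      rcases hvmem R hR1 (by omega) with ⟨j, hj1, hj2, hj3⟩ | ⟨j, hj1, hj2, hj3⟩
      · rw [hj3]; exact hαpos j hj1 hj2
      · rw [hj3]; exact hγpos j hj1 hj2
    have hRcast : (R : ℚ) = (x : ℚ) + z := by
      rw [← hB]; push_cast; ring
    have hncast : (n : ℚ) = (x : ℚ) + y + z + w := by rw [hn]; push_cast; ring
    rw [h1, hR1', hL2, hd, hd2]
    linarith
  rcases eq_or_lt_of_le (by omega : x + z + 1 ≤ R) with hC1 | hC2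
  · -- R = x+z+1 : transition from the big block
    have hyw : 1 ≤ y + w := by omega
    have h2 := hL3 1 le_rfl hyw
    have hR1' : R + 1 = x + z + 1 + 1 := by omega
    have hd' := hd1 (R+1) (by omega) (by omega) (by omega)
    have hunp : u 1 ≤ 0 := by
      rcases humem 1 le_rfl hyw with ⟨j, hj1, hj2, hj3⟩ | ⟨j, hj1, hj2, hj3⟩
      · rw [hj3]; exact hβnp j hj1 hj2
      · rw [hj3]; exact hδnp j hj1 hj2
    have hncast : (n : ℚ) = (x : ℚ) + y + z + w := by rw [hn]; push_cast; ring
    rw [hC1] at hL2 hd2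
    rw [hL2, hd2, hd', hR1', h2]
    push_cast
    linarith
  · -- both singletons in u-range
    obtain ⟨R', hR'⟩ : ∃ R', R = x + z + 1 + R' := ⟨R - (x+z+1), by omega⟩
    have hR'1 : 1 ≤ R' := by omega
    have hR'2 : R' + 1 ≤ y + w := by omega
    have h1 := hL3 R' hR'1 (by omega)
    have h2 := hL3 (R'+1) (by omega) hR'2
    have hu := hudec R' (R'+1) hR'1 (by omega) hR'2
    have hd := hd1 R hR1 (by omega) (by omega)
    have hd' := hd1 (R+1) (by omega) (by omega) (by omega)
    have e1 : R + 1 = x + z + 1 + (R' + 1) := by omega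
    rw [hR'] at hd
    rw [e1] at hd' ⊢
    rw [hR', h1, h2, hd, hd']
    push_cast
    linarith
end
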